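/- Every path with an odd number of vertices (i.e., even length) is a dominating graph; in particular, for all 2 ≤ m ≤ n with n odd, t_{P_n}(W)^{1/(n-1)} ≥ t_{P_m}(W)^{1/(m-1)} for every graphon W, where P_k denotes the path on k vertices. -/

import Mathlib

open MeasureTheory
open scoped Classical

noncomputable section

/-- A graphon: a symmetric measurable function `[0,1]² → [0,1]` (extended to `ℝ²`). -/
structure Graphon where
  toFun : ℝ → ℝ → ℝ
  symm : ∀ x y, toFun x y = toFun y x
  measurable' : Measurable (Function.uncurry toFun)
  nonneg : ∀ x y, 0 ≤ toFun x y
  le_one : ∀ x y, toFun x y ≤ 1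

/-- The number of edges of a finite simple graph. -/
def SimpleGraph.edgeCard {V : Type} [Fintype V] (H : SimpleGraph V) : ℕ :=
  H.edgeSet.toFinset.card

/-- The homomorphism density `t_H(W)` of a graph `H` in a graphon `W`. -/
def homDensity {V : Type} [Fintype V] (H : SimpleGraph V) (W : Graphon) : ℝ :=
  ∫ x in (Set.univ.pi fun _ : V => Set.Icc (0:ℝ) 1),
    ∏ e ∈ H.edgeSet.toFinset,
      Sym2.lift ⟨fun i j => W.toFun (x i) (x j), fun i j => W.symm (x i) (x j)⟩ e

/-- The homomorphism density of an edge subset `J` (of a graph on vertex set `V`). -/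
def subDensity {V : Type} [Fintype V] (J : Finset (Sym2 V)) (W : Graphon) : ℝ :=
  ∫ x in (Set.univ.pi fun _ : V => Set.Icc (0:ℝ) 1),
    ∏ e ∈ J,
      Sym2.lift ⟨fun i j => W.toFun (x i) (x j), fun i j => W.symm (x i) (x j)⟩ e

/-- `H` dominates `H'`: `t_H(W)^{1/e(H)} ≥ t_{H'}(W)^{1/e(H')}` for every graphon `W`. -/
def Dominates {V V' : Type} [Fintype V] [Fintype V']
    (H : SimpleGraph V) (H' : SimpleGraph V') : Prop :=
  ∀ W : Graphon,
    homDensity H' W ^ ((1 : ℝ) / H'.edgeCard) ≤ homDensity H W ^ ((1 : ℝ) / H.edgeCard)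

/-- `H'` is (isomorphic to) a subgraph of `H`. -/
def IsSubgraphOf {V V' : Type} (H' : SimpleGraph V') (H : SimpleGraph V) : Prop :=
  ∃ f : H' →g H, Function.Injective f

/-- `H` is dominating: it dominates all of its subgraphs with at least one edge. -/
def IsDominating {V : Type} [Fintype V] (H : SimpleGraph V) : Prop :=
  ∀ (V' : Type) [Fintype V'] (H' : SimpleGraph V'),
    IsSubgraphOf H' H → 1 ≤ H'.edgeCard → Dominates H H'

/-- The disjoint union of `r` copies of `H`. -/
def nCopies {V : Type} (H : SimpleGraph V) (r : ℕ) : SimpleGraph (V × Fin r) where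
  Adj a b := a.2 = b.2 ∧ H.Adj a.1 b.1
  symm := ⟨fun a b h => ⟨h.1.symm, h.2.symm⟩⟩
  loopless := ⟨fun a h => SimpleGraph.irrefl H h.2⟩

/-- The disjoint union of two graphs. -/
def disjUnion {V₁ V₂ : Type} (H₁ : SimpleGraph V₁) (H₂ : SimpleGraph V₂) :
    SimpleGraph (V₁ ⊕ V₂) where
  Adj a b := match a, b with
    | .inl a, .inl b => H₁.Adj a b
    | .inr a, .inr b => H₂.Adj a b
    | _, _ => False
  symm := ⟨by rintro (a|a) (b|b) h <;> simp_all <;> exact h.symm⟩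
  loopless := ⟨by rintro (a|a) h <;> exact (SimpleGraph.irrefl _) h⟩

/-- A cut involution of `H`: an involutive automorphism whose fixed set is a vertex
cut separating `L` and `R`, which are swapped by the involution, with no edges
between `L` and `R`. -/
structure CutInvolution {V : Type} (H : SimpleGraph V) where
  toEquiv : V ≃ V
  adj_iff : ∀ v w, H.Adj (toEquiv v) (toEquiv w) ↔ H.Adj v w
  invol : ∀ v, toEquiv (toEquiv v) = v
  L : Set V
  R : Set V
  disj : Disjoint L R
  cover : ∀ v, toEquiv v ≠ v → v ∈ L ∨ v ∈ R
  not_fixed : ∀ v ∈ L ∪ R, toEquiv v ≠ v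
  maps : ∀ v ∈ L, toEquiv v ∈ R
  no_edge : ∀ v ∈ L, ∀ w ∈ R, ¬ H.Adj v w
  L_nonempty : L.Nonempty
  R_nonempty : R.Nonempty

/-- The left-folding map `φ⁺` of a cut involution. -/
def CutInvolution.plusMap {V : Type} {H : SimpleGraph V} (c : CutInvolution H) : V → V :=
  fun v => if v ∈ c.R then c.toEquiv v else v

/-- The right-folding map `φ⁻` of a cut involution. -/
def CutInvolution.minusMap {V : Type} {H : SimpleGraph V} (c : CutInvolution H) : V → V :=
  fun v => if v ∈ c.L then c.toEquiv v else v

/-- `J(ψ) = {e ∈ E(H) : ψ(e) ∈ J}` for a (half-folding) map `ψ` on vertices. -/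
def foldSet {V : Type} [Fintype V] (H : SimpleGraph V) (J : Finset (Sym2 V)) (ψ : V → V) :
    Finset (Sym2 V) :=
  H.edgeSet.toFinset.filter (fun e => Sym2.map ψ e ∈ J)

/-- The number of homomorphisms from `H` to `G`. -/
def homCount {V U : Type} [Fintype V] [Fintype U]
    (H : SimpleGraph V) (G : SimpleGraph U) : ℕ :=
  Nat.card (H →g G)

/-- The homomorphism density `t_H(G)` for finite graphs. -/
def homDensityG {V U : Type} [Fintype V] [Fintype U]
    (H : SimpleGraph V) (G : SimpleGraph U) : ℝ :=
  (homCount H G : ℝ) / (Fintype.card U : ℝ) ^ (Fintype.card V)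

/-- The tensor (categorical) product of two graphs. -/
def tensorProd {V U : Type} (H : SimpleGraph V) (K : SimpleGraph U) :
    SimpleGraph (V × U) where
  Adj a b := H.Adj a.1 b.1 ∧ K.Adj a.2 b.2
  symm := ⟨fun a b h => ⟨h.1.symm, h.2.symm⟩⟩
  loopless := ⟨fun a h => SimpleGraph.irrefl H h.1⟩

/-- The auxiliary graph `G*` on ordered `m`-tuples of vertices of `G`, with `a ~ a'`
iff every coordinate of `a` is adjacent in `G` to every coordinate of `a'`. -/
def auxPower {U : Type} (G : SimpleGraph U) (m : ℕ) (hm : 1 ≤ m) :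
    SimpleGraph (Fin m → U) where
  Adj a b := ∀ i j, G.Adj (a i) (b j)
  symm := ⟨fun a b h i j => (h j i).symm⟩
  loopless := ⟨fun a h => SimpleGraph.irrefl G (h ⟨0, hm⟩ ⟨0, hm⟩)⟩

/-- The graph `C₆⁺`: a 6-cycle on vertices `0,…,5` together with a central vertex `6`
joined to the alternating vertices `0, 2, 4`. -/
def C6plus : SimpleGraph (Fin 7) := SimpleGraph.fromRel (fun a b =>
  (a.1 < 6 ∧ b.1 < 6 ∧ b.1 % 6 = (a.1 + 1) % 6) ∨ (a = 6 ∧ (b = 0 ∨ b = 2 ∨ b = 4)))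

end

/-
Let `f_k(x)` be the density of `k`-edge paths starting at `x` and `a_k = ∫ f_k = t(P_{k+1}, W)`.
By the symmetry of `W`, `∫ f_i f_j = a_{i+j}`, so Cauchy–Schwarz gives
`a_{i+j}² ≤ a_{2i} a_{2j}`. Thus the even moments are log-convex with `a_0 = 1`, whence
`a_{2i}^{1/i}` increases, and every `m ≤ 2N` satisfies `a_m^{2N} ≤ a_{2N}^m`.
A subgraph `H'` of `P_{2N+1}` is a linear forest: integrating out its vertices from one end
writes `t(H', W)` as a product `a_{ℓ_1} ⋯ a_{ℓ_r}` with `ℓ_1 + ⋯ + ℓ_r = e(H')`,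
so `t(H', W)^{2N} ≤ a_{2N}^{e(H')}`, which is the domination inequality.
-/

open MeasureTheory Finset SimpleGraph

lemma integrable_of_mem_unitInterval {α : Type*} [MeasurableSpace α] {μ : Measure α}
    [IsFiniteMeasure μ] {f : α → ℝ} (hf : Measurable f) (hI : ∀ x, f x ∈ unitInterval) :
    Integrable f μ :=
  .of_bound hf.aestronglyMeasurable 1 <| ae_of_all _ fun x => by
    rw [Real.norm_of_nonneg (hI x).1]
    exact (hI x).2

lemma integral_mem_unitInterval {α : Type*} [MeasurableSpace α] {μ : Measure α}
    [IsProbabilityMeasure μ] {f : α → ℝ} (hf : Measurable f) (hI : ∀ x, f x ∈ unitInterval) :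
    ∫ x, f x ∂μ ∈ unitInterval :=
  ⟨integral_nonneg fun x => (hI x).1, by
    simpa using integral_mono (integrable_of_mem_unitInterval (μ := μ) hf hI)
      (integrable_const (1 : ℝ)) fun x => (hI x).2⟩

lemma prod_mem_unitInterval {ι : Type*} {s : Finset ι} {f : ι → ℝ}
    (hI : ∀ i ∈ s, f i ∈ unitInterval) : ∏ i ∈ s, f i ∈ unitInterval :=
  prod_induction f (· ∈ unitInterval) (fun _ _ => unitInterval.mul_mem) unitInterval.one_mem hI

lemma sq_integral_mul_le {α : Type*} [MeasurableSpace α] {μ : Measure α} {f g : α → ℝ}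
    (hff : Integrable (fun x => f x * f x) μ) (hfg : Integrable (fun x => f x * g x) μ)
    (hgg : Integrable (fun x => g x * g x) μ) :
    (∫ x, f x * g x ∂μ) ^ 2 ≤ (∫ x, f x * f x ∂μ) * ∫ x, g x * g x ∂μ := by
  have hquad : ∀ t : ℝ, 0 ≤ (∫ x, f x * f x ∂μ) * (t * t) + 2 * (∫ x, f x * g x ∂μ) * t +
      ∫ x, g x * g x ∂μ := by
    intro t
    have hexpand : ∀ x, (t * f x + g x) ^ 2 =
        t * t * (f x * f x) + 2 * t * (f x * g x) + g x * g x := fun x => by ring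
    have : 0 ≤ ∫ x, (t * f x + g x) ^ 2 ∂μ := integral_nonneg fun x => sq_nonneg _
    simp_rw [hexpand] at this
    rw [integral_add (f := fun x => t * t * (f x * f x) + 2 * t * (f x * g x))
        ((hff.const_mul _).add (hfg.const_mul _)) hgg,
      integral_add (hff.const_mul _) (hfg.const_mul _), integral_const_mul,
      integral_const_mul] at this
    linarith
  have := discrim_le_zero hquad
  rw [discrim] at this
  nlinarith

lemma integral_pi_fin_succ {α : Type*} [MeasurableSpace α] (μ : Measure α) [SigmaFinite μ]
    {m : ℕ} {F : (Fin (m + 1) → α) → ℝ} (hF : Integrable F (Measure.pi fun _ => μ)) :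
    ∫ x, F x ∂(Measure.pi fun _ => μ) =
      ∫ z, ∫ y, F (Fin.cons y z) ∂μ ∂(Measure.pi fun _ => μ) := by
  have e := (measurePreserving_piFinSuccAbove (fun _ : Fin (m + 1) => μ) 0).symm
  rw [← e.integral_comp', integral_prod_symm]
  · simp [MeasurableEquiv.piFinSuccAbove_symm_apply, Fin.insertNthEquiv, Fin.insertNth_zero']
  · exact (e.integrable_comp_emb (MeasurableEquiv.measurableEmbedding _)).2 hF

lemma MeasureTheory.Measure.map_comp_pi_of_injective {ι κ α : Type*} [Fintype ι] [Fintype κ]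
    [MeasurableSpace α] (μ : Measure α) [IsProbabilityMeasure μ] {g : ι → κ}
    (hg : Function.Injective g) :
    (Measure.pi fun _ : κ => μ).map (fun x => x ∘ g) = Measure.pi fun _ : ι => μ := by
  rw [← Measure.infinitePi_eq_pi, ← Measure.infinitePi_eq_pi]
  refine Measure.eq_infinitePi _ fun s t ht => ?_
  have hpre : (fun x : κ → α => x ∘ g) ⁻¹' (s : Set ι).pi t =
      ((s.image g : Finset κ) : Set κ).pi (Function.extend g t fun _ => Set.univ) := by
    ext x
    simp [hg.extend_apply]
  rw [Measure.map_apply (by fun_prop) (.pi s.countable_toSet fun i _ => ht i), hpre,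
    Measure.infinitePi_pi, prod_image hg.injOn]
  · exact prod_congr rfl fun i _ => by rw [hg.extend_apply]
  · simp only [mem_image, forall_exists_index, and_imp, forall_apply_eq_imp_iff₂]
    exact fun i _ => by rw [hg.extend_apply]; exact ht i

lemma rpow_one_div_le_rpow_one_div_of_pow_le {x y : ℝ} (hx : 0 ≤ x) (hy : 0 ≤ y) {a b : ℕ}
    (ha : 0 < a) (hb : 0 < b) (h : x ^ b ≤ y ^ a) :
    x ^ ((1 : ℝ) / a) ≤ y ^ ((1 : ℝ) / b) := by
  have hroot {z : ℝ} (hz : 0 ≤ z) (c d : ℕ) (hc : 0 < c) :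
      z ^ ((1 : ℝ) / d) = (z ^ c) ^ ((1 : ℝ) / (d * c)) := by
    rw [← Real.rpow_natCast, ← Real.rpow_mul hz]
    congr 1
    field_simp
  rw [hroot hx b a hb, hroot hy a b ha, mul_comm (b : ℝ)]
  exact Real.rpow_le_rpow (pow_nonneg hx _) h (by positivity)

lemma pow_succ_le_pow_of_sq_le_mul {b : ℕ → ℝ} (hb : ∀ k, 0 ≤ b k) (hb₀ : b 0 ≤ 1)
    (hconv : ∀ k, b (k + 1) ^ 2 ≤ b k * b (k + 2)) (k : ℕ) : b k ^ (k + 1) ≤ b (k + 1) ^ k := by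
  induction k with
  | zero => simpa using hb₀
  | succ k ih =>
    rcases (hb (k + 1)).eq_or_lt with hzero | hpos
    · rw [← hzero, zero_pow (by omega)]
      exact pow_nonneg (hb _) _
    refine le_of_mul_le_mul_left ?_ (pow_pos hpos k)
    calc b (k + 1) ^ k * b (k + 1) ^ (k + 2) = (b (k + 1) ^ 2) ^ (k + 1) := by ring
      _ ≤ (b k * b (k + 2)) ^ (k + 1) := pow_le_pow_left₀ (sq_nonneg _) (hconv k) _
      _ = b k ^ (k + 1) * b (k + 2) ^ (k + 1) := mul_pow _ _ _
      _ ≤ b (k + 1) ^ k * b (k + 2) ^ (k + 1) :=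
        mul_le_mul_of_nonneg_right ih (pow_nonneg (hb _) _)

lemma pow_le_pow_of_sq_le_mul {b : ℕ → ℝ} (hb : ∀ k, 0 ≤ b k) (hb₀ : b 0 ≤ 1)
    (hconv : ∀ k, b (k + 1) ^ 2 ≤ b k * b (k + 2)) {i j : ℕ} (hij : i ≤ j) :
    b i ^ j ≤ b j ^ i := by
  rcases Nat.eq_zero_or_pos i with rfl | hi
  · simpa using pow_le_one₀ (hb 0) hb₀
  induction j, hij using Nat.le_induction with
  | base => rfl
  | succ j hij ih =>
    refine le_of_pow_le_pow_left₀ (n := j) (by omega) (pow_nonneg (hb _) _) ?_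
    calc (b i ^ (j + 1)) ^ j = (b i ^ j) ^ (j + 1) := by ring
      _ ≤ (b j ^ i) ^ (j + 1) := pow_le_pow_left₀ (pow_nonneg (hb _) _) ih _
      _ = (b j ^ (j + 1)) ^ i := by ring
      _ ≤ (b (j + 1) ^ j) ^ i :=
        pow_le_pow_left₀ (pow_nonneg (hb _) _) (pow_succ_le_pow_of_sq_le_mul hb hb₀ hconv j) _
      _ = (b (j + 1) ^ i) ^ j := by ring

lemma pow_le_pow_of_sq_add_le_mul {a : ℕ → ℝ} (ha : ∀ k, 0 ≤ a k) (ha₀ : a 0 ≤ 1)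
    (hcs : ∀ i j, a (i + j) ^ 2 ≤ a (2 * i) * a (2 * j)) {m N : ℕ} (hm : m ≤ 2 * N) :
    a m ^ (2 * N) ≤ a (2 * N) ^ m := by
  have heven {i : ℕ} (hi : i ≤ N) : a (2 * i) ^ N ≤ a (2 * N) ^ i :=
    pow_le_pow_of_sq_le_mul (b := fun k => a (2 * k)) (fun k => ha _) ha₀
      (fun k => by simpa [show k + (k + 2) = 2 * (k + 1) by ring] using hcs k (k + 2)) hi
  obtain ⟨i, j, rfl, hi, hj⟩ : ∃ i j, i + j = m ∧ i ≤ N ∧ j ≤ N :=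
    ⟨m / 2, m - m / 2, by omega, by omega, by omega⟩
  refine le_of_pow_le_pow_left₀ two_ne_zero (pow_nonneg (ha _) _) ?_
  calc (a (i + j) ^ (2 * N)) ^ 2 = (a (i + j) ^ 2) ^ (2 * N) := by ring
    _ ≤ (a (2 * i) * a (2 * j)) ^ (2 * N) := pow_le_pow_left₀ (sq_nonneg _) (hcs i j) _
    _ = (a (2 * i) ^ N) ^ 2 * (a (2 * j) ^ N) ^ 2 := by ring
    _ ≤ (a (2 * N) ^ i) ^ 2 * (a (2 * N) ^ j) ^ 2 := by
      gcongr
      exacts [pow_nonneg (ha _) _, heven hi, pow_nonneg (ha _) _, heven hj]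
    _ = (a (2 * N) ^ (i + j)) ^ 2 := by ring

def natCoord {n : ℕ} (x : Fin n → ℝ) (i : ℕ) : ℝ := if h : i < n then x ⟨i, h⟩ else 0

@[fun_prop]
lemma measurable_natCoord {n : ℕ} : Measurable (natCoord : (Fin n → ℝ) → ℕ → ℝ) := by
  refine measurable_pi_lambda _ fun i => ?_
  unfold natCoord
  split_ifs
  exacts [measurable_pi_apply _, measurable_const]

@[simp]
lemma natCoord_val {n : ℕ} (x : Fin n → ℝ) (i : Fin n) : natCoord x i = x i := by
  simp [natCoord]

@[simp]
lemma natCoord_cons_zero {m : ℕ} (y : ℝ) (z : Fin m → ℝ) :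
    natCoord (Fin.cons y z : Fin (m + 1) → ℝ) 0 = y := by
  simp [natCoord]

@[simp]
lemma natCoord_cons_succ {m : ℕ} (y : ℝ) (z : Fin m → ℝ) (i : ℕ) :
    natCoord (Fin.cons y z : Fin (m + 1) → ℝ) (i + 1) = natCoord z i := by
  unfold natCoord
  by_cases h : i < m
  · rw [dif_pos (by omega), dif_pos h]
    exact Fin.cons_succ (α := fun _ => ℝ) y z ⟨i, h⟩
  · rw [dif_neg (by omega), dif_neg h]

noncomputable def succPreimage (S : Finset ℕ) : Finset ℕ :=
  S.preimage (· + 1) (add_left_injective 1).injOn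

@[simp]
lemma mem_succPreimage {S : Finset ℕ} {j : ℕ} : j ∈ succPreimage S ↔ j + 1 ∈ S := mem_preimage

@[simp]
lemma succPreimage_empty : succPreimage ∅ = ∅ := by
  ext
  simp

lemma succPreimage_range (m : ℕ) : succPreimage (range m) = range (m - 1) := by
  ext j
  simp only [mem_succPreimage, mem_range]
  omega

lemma map_succPreimage (S : Finset ℕ) :
    (succPreimage S).map ⟨(· + 1), add_left_injective 1⟩ = S.erase 0 := by
  ext i
  cases i <;> simp

lemma card_succPreimage (S : Finset ℕ) : #(succPreimage S) = #(S.erase 0) := by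
  rw [← map_succPreimage, card_map]

lemma prod_eq_ite_mul_prod_succPreimage {β : Type*} [CommMonoid β] (S : Finset ℕ) (h : ℕ → β) :
    ∏ i ∈ S, h i = (if 0 ∈ S then h 0 else 1) * ∏ j ∈ succPreimage S, h (j + 1) := by
  have : ∏ j ∈ succPreimage S, h (j + 1) = ∏ i ∈ S.erase 0, h i := by
    rw [← map_succPreimage, prod_map]
    rfl
  rw [this]
  split_ifs with h0
  · exact (mul_prod_erase S h h0).symm
  · rw [erase_eq_of_notMem h0, one_mul]

noncomputable def unitIntervalMeasure : Measure ℝ := volume.restrict unitInterval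

local notation "μI" => unitIntervalMeasure

instance : IsProbabilityMeasure μI :=
  ⟨by simp [unitIntervalMeasure, unitInterval, Real.volume_Icc]⟩

namespace Graphon

variable (W : Graphon)

lemma mem_unitInterval (x y : ℝ) : W.toFun x y ∈ unitInterval := ⟨W.nonneg x y, W.le_one x y⟩

@[fun_prop]
lemma measurable_comp {α : Type*} [MeasurableSpace α] {f g : α → ℝ} (hf : Measurable f)
    (hg : Measurable g) : Measurable fun a => W.toFun (f a) (g a) :=
  W.measurable'.comp (hf.prodMk hg)

/-- `W.walkFun k x = t_x(P_{k+1})`, the density of `k`-edge paths starting at `x`. -/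
noncomputable def walkFun : ℕ → ℝ → ℝ
  | 0 => fun _ => 1
  | k + 1 => fun x => ∫ y, W.toFun x y * walkFun k y ∂μI

@[fun_prop]
lemma measurable_walkFun : ∀ k, Measurable (W.walkFun k)
  | 0 => measurable_const
  | k + 1 => (StronglyMeasurable.integral_prod_right'
      (f := fun p : ℝ × ℝ => W.toFun p.1 p.2 * W.walkFun k p.2)
      ((W.measurable_comp measurable_fst measurable_snd).mul
        ((measurable_walkFun k).comp measurable_snd)).stronglyMeasurable).measurable

lemma walkFun_mem_unitInterval : ∀ k x, W.walkFun k x ∈ unitInterval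
  | 0, _ => unitInterval.one_mem
  | k + 1, x => integral_mem_unitInterval (by fun_prop) fun y =>
      unitInterval.mul_mem (W.mem_unitInterval x y) (walkFun_mem_unitInterval k y)

lemma walkFun_succ_eq_integral_mul (k : ℕ) (x : ℝ) :
    W.walkFun (k + 1) x = ∫ y, W.walkFun k y * W.toFun y x ∂μI := by
  simp only [walkFun, W.symm x, mul_comm]

lemma integrable_walkFun_mul (a b : ℕ) :
    Integrable (fun x => W.walkFun a x * W.walkFun b x) μI :=
  integrable_of_mem_unitInterval (by fun_prop) fun x =>
    unitInterval.mul_mem (W.walkFun_mem_unitInterval a x) (W.walkFun_mem_unitInterval b x)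

noncomputable def pathMoment (k : ℕ) : ℝ := ∫ x, W.walkFun k x ∂μI

lemma pathMoment_nonneg (k : ℕ) : 0 ≤ W.pathMoment k :=
  integral_nonneg fun x => (W.walkFun_mem_unitInterval k x).1

lemma pathMoment_zero : W.pathMoment 0 = 1 := by simp [pathMoment, walkFun]

lemma integral_walkFun_succ_mul (a b : ℕ) :
    ∫ x, W.walkFun (a + 1) x * W.walkFun b x ∂μI =
      ∫ x, W.walkFun a x * W.walkFun (b + 1) x ∂μI := by
  simp only [walkFun, ← integral_mul_const, ← integral_const_mul]
  rw [integral_integral_swap]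
  · refine integral_congr_ae (ae_of_all _ fun y => integral_congr_ae (ae_of_all _ fun x => ?_))
    simp only [W.symm x y]
    ring
  · exact integrable_of_mem_unitInterval (by fun_prop) fun p => unitInterval.mul_mem
      (unitInterval.mul_mem (W.mem_unitInterval _ _) (W.walkFun_mem_unitInterval a _))
      (W.walkFun_mem_unitInterval b _)

lemma integral_walkFun_mul (a b : ℕ) :
    ∫ x, W.walkFun a x * W.walkFun b x ∂μI = W.pathMoment (a + b) := by
  induction a generalizing b with
  | zero => simp [walkFun, pathMoment]
  | succ a ih => rw [integral_walkFun_succ_mul, ih, add_right_comm, add_assoc]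

lemma pathMoment_sq_le (i j : ℕ) :
    W.pathMoment (i + j) ^ 2 ≤ W.pathMoment (2 * i) * W.pathMoment (2 * j) := by
  simp only [← integral_walkFun_mul, two_mul]
  exact sq_integral_mul_le (W.integrable_walkFun_mul i i) (W.integrable_walkFun_mul i j)
    (W.integrable_walkFun_mul j j)

def pathProd (S : Finset ℕ) (x : ℕ → ℝ) : ℝ := ∏ i ∈ S, W.toFun (x i) (x (i + 1))

@[fun_prop]
lemma measurable_pathProd (S : Finset ℕ) : Measurable (W.pathProd S) :=
  Finset.measurable_prod _ fun i _ => W.measurable_comp (measurable_pi_apply i)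
    (measurable_pi_apply (i + 1))

lemma pathProd_mem_unitInterval (S : Finset ℕ) (x : ℕ → ℝ) : W.pathProd S x ∈ unitInterval :=
  prod_mem_unitInterval fun _ _ => W.mem_unitInterval _ _

lemma pathProd_natCoord_cons {m : ℕ} (S : Finset ℕ) (y : ℝ) (z : Fin m → ℝ) :
    W.pathProd S (natCoord (Fin.cons y z : Fin (m + 1) → ℝ)) =
      (if 0 ∈ S then W.toFun y (natCoord z 0) else 1) *
        W.pathProd (succPreimage S) (natCoord z) := by
  rw [pathProd, prod_eq_ite_mul_prod_succPreimage]
  simp only [natCoord_cons_zero, natCoord_cons_succ, pathProd]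

/-- `W.forestDensity n k S` is the density of the linear forest on the vertices `0, …, n - 1`
with edges `{i, i + 1}` for `i ∈ S`, with an extra path of `k` edges hanging from vertex `0`. -/
noncomputable def forestDensity (n k : ℕ) (S : Finset ℕ) : ℝ :=
  ∫ x, W.walkFun k (natCoord x 0) * W.pathProd S (natCoord x) ∂(Measure.pi fun _ : Fin n => μI)

lemma forestDensity_nonneg (n k : ℕ) (S : Finset ℕ) : 0 ≤ W.forestDensity n k S :=
  integral_nonneg fun _ => mul_nonneg (W.walkFun_mem_unitInterval k _).1
    (W.pathProd_mem_unitInterval S _).1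

lemma forestDensity_zero_empty : W.forestDensity 0 0 ∅ = 1 := by
  simp [forestDensity, walkFun, pathProd]

lemma forestDensity_succ (m k : ℕ) (S : Finset ℕ) :
    W.forestDensity (m + 1) k S =
      if 0 ∈ S then W.forestDensity m (k + 1) (succPreimage S)
      else W.pathMoment k * W.forestDensity m 0 (succPreimage S) := by
  rw [forestDensity, integral_pi_fin_succ _ (integrable_of_mem_unitInterval (by fun_prop)
    fun x => unitInterval.mul_mem (W.walkFun_mem_unitInterval k _)
      (W.pathProd_mem_unitInterval S _))]
  simp only [natCoord_cons_zero, pathProd_natCoord_cons]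
  split_ifs
  · simp only [forestDensity, ← mul_assoc, integral_mul_const, walkFun_succ_eq_integral_mul]
  · simp only [forestDensity, integral_mul_const, walkFun, one_mul, integral_const_mul]
    rfl

lemma forestDensity_range (m k : ℕ) :
    W.forestDensity (m + 1) k (range m) = W.pathMoment (k + m) := by
  induction m generalizing k with
  | zero => simp [forestDensity_succ, forestDensity_zero_empty]
  | succ m ih =>
    rw [forestDensity_succ, if_pos (by simp), succPreimage_range, Nat.add_sub_cancel, ih,
      add_right_comm, add_assoc]

lemma forestDensity_pow_le {M : ℕ} (hM : ∀ j ≤ M, W.pathMoment j ^ M ≤ W.pathMoment M ^ j) :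
    ∀ (n k : ℕ) (S : Finset ℕ), S ⊆ range n → k + #S ≤ M →
      W.forestDensity (n + 1) k S ^ M ≤ W.pathMoment M ^ (k + #S)
  | 0, k, S, hS, hk => by
    obtain rfl : S = ∅ := by simpa using hS
    simpa [forestDensity_succ, forestDensity_zero_empty] using
      hM k (by simpa using hk)
  | n + 1, k, S, hS, hk => by
    have hsub : succPreimage S ⊆ range n := fun j hj => by
      simpa using hS (mem_succPreimage.1 hj)
    have hcard := card_succPreimage S
    rw [forestDensity_succ]
    split_ifs with h0
    · rw [card_erase_of_mem h0] at hcard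
      have hpos : 0 < #S := card_pos.2 ⟨0, h0⟩
      calc _ ≤ W.pathMoment M ^ (k + 1 + #(succPreimage S)) :=
            forestDensity_pow_le hM n (k + 1) _ hsub (by omega)
        _ = _ := by congr 1; omega
    · rw [erase_eq_of_notMem h0] at hcard
      rw [mul_pow, ← hcard, pow_add]
      exact mul_le_mul (hM k (by omega))
        (by simpa using forestDensity_pow_le hM n 0 _ hsub (by omega))
        (pow_nonneg (W.forestDensity_nonneg _ _ _) _) (pow_nonneg (W.pathMoment_nonneg _) _)

def edgeWeight {V : Type} (x : V → ℝ) : Sym2 V → ℝ :=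
  Sym2.lift ⟨fun i j => W.toFun (x i) (x j), fun i j => W.symm (x i) (x j)⟩

lemma edgeWeight_comp_map {V V' : Type} (x : V → ℝ) (g : V' → V) (e : Sym2 V') :
    W.edgeWeight (x ∘ g) e = W.edgeWeight x (e.map g) := by
  induction e using Sym2.ind
  rfl

lemma measurable_edgeWeight {V : Type} (e : Sym2 V) :
    Measurable fun x : V → ℝ => W.edgeWeight x e := by
  induction e using Sym2.ind
  exact W.measurable_comp (measurable_pi_apply _) (measurable_pi_apply _)

lemma homDensity_eq_integral {V : Type} [Fintype V] (H : SimpleGraph V) :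
    homDensity H W =
      ∫ x, ∏ e ∈ H.edgeSet.toFinset, W.edgeWeight x e ∂(Measure.pi fun _ : V => μI) := by
  rw [homDensity, volume_pi, Measure.restrict_pi_pi]
  rfl

end Graphon

namespace SimpleGraph

def pathEdgeIndex {n : ℕ} : Sym2 (Fin n) → ℕ :=
  Sym2.lift ⟨fun a b => min a.1 b.1, fun _ _ => min_comm _ _⟩

lemma exists_eq_of_mem_edgeSet_pathGraph {n : ℕ} {e : Sym2 (Fin n)}
    (he : e ∈ (pathGraph n).edgeSet) :
    ∃ a b : Fin n, (a : ℕ) + 1 = b ∧ e = s(a, b) ∧ pathEdgeIndex e = a := by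
  induction e using Sym2.ind with
  | _ u v =>
    rw [mem_edgeSet, pathGraph_adj] at he
    rcases he with h | h
    · exact ⟨u, v, h, rfl, show min u.1 v.1 = u.1 by omega⟩
    · exact ⟨v, u, h, Sym2.eq_swap, show min u.1 v.1 = v.1 by omega⟩

lemma pathEdgeIndex_add_one_lt {n : ℕ} {e : Sym2 (Fin n)} (he : e ∈ (pathGraph n).edgeSet) :
    pathEdgeIndex e + 1 < n := by
  obtain ⟨a, b, hab, -, ha⟩ := exists_eq_of_mem_edgeSet_pathGraph he
  omega

lemma injOn_pathEdgeIndex {n : ℕ} : Set.InjOn pathEdgeIndex (pathGraph n).edgeSet := by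
  intro e he e' he' h
  obtain ⟨a, b, hab, rfl, ha⟩ := exists_eq_of_mem_edgeSet_pathGraph he
  obtain ⟨a', b', hab', rfl, ha'⟩ := exists_eq_of_mem_edgeSet_pathGraph he'
  obtain rfl : a = a' := Fin.ext (by omega)
  obtain rfl : b = b' := Fin.ext (by omega)
  rfl

noncomputable def edgeIndices {V' : Type} [Fintype V'] {n : ℕ} (H' : SimpleGraph V')
    (g : V' → Fin n) : Finset ℕ :=
  H'.edgeSet.toFinset.image fun e => pathEdgeIndex (e.map g)

variable {V' : Type} [Fintype V'] {n : ℕ} {H' : SimpleGraph V'} {g : H' →g pathGraph n}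

lemma injOn_pathEdgeIndex_map (hg : Function.Injective g) :
    Set.InjOn (fun e : Sym2 V' => pathEdgeIndex (e.map g)) (H'.edgeSet.toFinset : Set _) := by
  intro e he e' he' h
  simp only [Set.coe_toFinset] at he he'
  exact Sym2.map.injective hg <| injOn_pathEdgeIndex (g.map_mem_edgeSet he)
    (g.map_mem_edgeSet he') h

lemma edgeIndices_subset_range : edgeIndices H' g ⊆ range (n - 1) := by
  intro i hi
  obtain ⟨e, he, rfl⟩ := mem_image.1 hi
  have := pathEdgeIndex_add_one_lt (g.map_mem_edgeSet (Set.mem_toFinset.1 he))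
  rw [mem_range]
  omega

lemma card_edgeIndices (hg : Function.Injective g) : #(edgeIndices H' g) = H'.edgeCard :=
  card_image_of_injOn (injOn_pathEdgeIndex_map hg)

lemma edgeIndices_id : edgeIndices (pathGraph n) (Hom.id : pathGraph n →g pathGraph n) =
    range (n - 1) := by
  refine (edgeIndices_subset_range (g := Hom.id)).antisymm fun i hi => ?_
  have hi : i + 1 < n := by simp at hi; omega
  refine mem_image.2 ⟨s(⟨i, by omega⟩, ⟨i + 1, hi⟩), ?_, ?_⟩
  · simp [pathGraph_adj]
  · simp [pathEdgeIndex]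

lemma edgeCard_pathGraph (n : ℕ) : (pathGraph n).edgeCard = n - 1 := by
  rw [← card_edgeIndices (g := Hom.id) fun _ _ h => h, edgeIndices_id, card_range]

lemma isSubgraphOf_pathGraph {m n : ℕ} (h : m ≤ n) :
    IsSubgraphOf (pathGraph m) (pathGraph n) :=
  ⟨⟨Fin.castLE h, fun hab => by simpa [pathGraph_adj] using hab⟩, Fin.castLE_injective h⟩

end SimpleGraph

namespace Graphon

variable (W : Graphon)

lemma edgeWeight_of_mem_edgeSet_pathGraph {n : ℕ} (x : Fin n → ℝ)
    {e : Sym2 (Fin n)} (he : e ∈ (pathGraph n).edgeSet) :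
    W.edgeWeight x e =
      W.toFun (natCoord x (pathEdgeIndex e)) (natCoord x (pathEdgeIndex e + 1)) := by
  obtain ⟨a, b, hab, rfl, ha⟩ := exists_eq_of_mem_edgeSet_pathGraph he
  rw [ha, hab, natCoord_val, natCoord_val]
  rfl

lemma homDensity_eq_forestDensity {V' : Type} [Fintype V'] {n : ℕ}
    {H' : SimpleGraph V'} {g : H' →g pathGraph n} (hg : Function.Injective g) :
    homDensity H' W = W.forestDensity n 0 (edgeIndices H' g) := by
  have hcomp : Measurable fun x : Fin n → ℝ => x ∘ g :=
    measurable_pi_lambda _ fun _ => measurable_pi_apply _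
  rw [homDensity_eq_integral, ← Measure.map_comp_pi_of_injective μI hg,
    integral_map hcomp.aemeasurable
      (Finset.measurable_prod _ fun e _ => W.measurable_edgeWeight e).aestronglyMeasurable]
  refine integral_congr_ae (ae_of_all _ fun x => ?_)
  simp only [walkFun, one_mul, pathProd, edgeIndices, prod_image (injOn_pathEdgeIndex_map hg)]
  refine prod_congr rfl fun e he => ?_
  rw [edgeWeight_comp_map, W.edgeWeight_of_mem_edgeSet_pathGraph x
    (g.map_mem_edgeSet (Set.mem_toFinset.1 he))]

lemma homDensity_pathGraph (m : ℕ) :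
    homDensity (pathGraph (m + 1)) W = W.pathMoment m := by
  rw [W.homDensity_eq_forestDensity (g := Hom.id) fun _ _ h => h, edgeIndices_id,
    Nat.add_sub_cancel, forestDensity_range, zero_add]

end Graphon

theorem SimpleGraph.isDominating_pathGraph_two_mul_add_one (N : ℕ) :
    IsDominating (pathGraph (2 * N + 1)) := by
  intro V' _ H' ⟨g, hg⟩ hE W
  have hmoment (j : ℕ) (hj : j ≤ 2 * N) : W.pathMoment j ^ (2 * N) ≤ W.pathMoment (2 * N) ^ j :=
    pow_le_pow_of_sq_add_le_mul W.pathMoment_nonneg W.pathMoment_zero.le W.pathMoment_sq_le hj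
  have hsub : edgeIndices H' g ⊆ range (2 * N) := edgeIndices_subset_range
  have hcard : H'.edgeCard ≤ 2 * N := by
    simpa [card_edgeIndices hg] using card_le_card hsub
  have hbound := W.forestDensity_pow_le hmoment (2 * N) 0 _ hsub
    (by rwa [zero_add, card_edgeIndices hg])
  rw [zero_add, card_edgeIndices hg] at hbound
  rw [W.homDensity_eq_forestDensity hg, W.homDensity_pathGraph, edgeCard_pathGraph,
    Nat.add_sub_cancel]
  exact rpow_one_div_le_rpow_one_div_of_pow_le (W.forestDensity_nonneg _ _ _)
    (W.pathMoment_nonneg _) hE (by omega) hbound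

theorem stmt13 (n : ℕ) (hn : Odd n) :
    IsDominating (SimpleGraph.pathGraph n) ∧
      ∀ m : ℕ, 2 ≤ m → m ≤ n → ∀ W : Graphon,
        homDensity (SimpleGraph.pathGraph m) W ^ ((1 : ℝ) / ((m : ℝ) - 1)) ≤
          homDensity (SimpleGraph.pathGraph n) W ^ ((1 : ℝ) / ((n : ℝ) - 1)) := by
  obtain ⟨N, rfl⟩ := hn
  refine ⟨isDominating_pathGraph_two_mul_add_one N, fun m hm hmn W => ?_⟩
  have h := isDominating_pathGraph_two_mul_add_one N (Fin m) (pathGraph m)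
    (isSubgraphOf_pathGraph hmn) (by rw [edgeCard_pathGraph]; omega) W
  rwa [edgeCard_pathGraph, edgeCard_pathGraph, Nat.cast_pred (by omega),
    Nat.cast_pred (by omega)] at h
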